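/- Let s ≥ 3 and N ≥ 1. Suppose φ : Σ_s → ℝ^N is bounded by some R > 0 and exponentially locally determined. Then the closure of the pointwise rotation set J_φ is a convex subset of ℝ^N. -/

import Mathlib

/-!
Let `u, v` be the rotation vectors of `ξ₁, ξ₂` and `a, b > 0` with `a + b = 1`. Follow `ξ₁` for
about `a x` steps, then `ξ₂` for about `b x` steps, and close up into a periodic orbit; since
`s ≥ 3`, a spacer symbol keeps each junction admissible. By exponential local determinacy the
Birkhoff sum along each block differs from the corresponding sum along `ξᵢ` by a convergent
geometric series, so the rotation vector of the periodic orbit is `a • u + b • v + O(1 / x)`.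
Hence the open segment between two points of `J_φ` lies in its closure, and by continuity the
same holds for two points of the closure.
-/

open Filter Topology

/-- The symbol space `Σ_s`: bi-infinite admissible sequences over an alphabet with
`s` symbols (represented by `Fin s`), i.e. `ξ_i ≠ ξ_{i+1}` for all `i ∈ ℤ`. -/
def SymbSpace (s : ℕ) : Type := {ξ : ℤ → Fin s // ∀ i : ℤ, ξ i ≠ ξ (i + 1)}

/-- The (left) shift map `σ : Σ_s → Σ_s`, `(σξ)_i = ξ_{i+1}`. -/
def shift {s : ℕ} (ξ : SymbSpace s) : SymbSpace s :=
  ⟨fun i => ξ.1 (i + 1), fun i => ξ.2 (i + 1)⟩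

/-- Birkhoff average `A_n(ξ) = (1/n) ∑_{i=0}^{n-1} φ(σ^i ξ)`. -/
noncomputable def birk {s N : ℕ} (φ : SymbSpace s → EuclideanSpace ℝ (Fin N))
    (n : ℕ) (ξ : SymbSpace s) : EuclideanSpace ℝ (Fin N) :=
  (n : ℝ)⁻¹ • ∑ i ∈ Finset.range n, φ (shift^[i] ξ)

/-- `ρ` is the rotation vector `ρ_φ(ξ)`, i.e. the limit of the Birkhoff averages exists
and equals `ρ`. -/
def HasRotVec {s N : ℕ} (φ : SymbSpace s → EuclideanSpace ℝ (Fin N))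
    (ξ : SymbSpace s) (ρ : EuclideanSpace ℝ (Fin N)) : Prop :=
  Tendsto (fun n => birk φ n ξ) atTop (nhds ρ)

/-- `φ` is exponentially locally determined: there are `C > 0` and `δ ∈ (0,1)` such that
whenever `ξ_j = ξ'_j` for all `-m ≤ j ≤ m'`, one has `‖φ(ξ) - φ(ξ')‖ ≤ C(δ^m + δ^{m'})`. -/
def ExpLocDet {s N : ℕ} (φ : SymbSpace s → EuclideanSpace ℝ (Fin N)) : Prop :=
  ∃ C : ℝ, 0 < C ∧ ∃ δ : ℝ, 0 < δ ∧ δ < 1 ∧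
    ∀ (m m' : ℕ) (ξ ξ' : SymbSpace s),
      (∀ j : ℤ, -(m : ℤ) ≤ j → j ≤ (m' : ℤ) → ξ.1 j = ξ'.1 j) →
      ‖φ ξ - φ ξ'‖ ≤ C * (δ ^ m + δ ^ m')

/-- The pointwise rotation set `J_φ`: all rotation vectors `ρ_φ(ξ)` that exist. -/
def PointwiseRot {s N : ℕ} (φ : SymbSpace s → EuclideanSpace ℝ (Fin N)) :
    Set (EuclideanSpace ℝ (Fin N)) :=
  {ρ | ∃ ξ : SymbSpace s, HasRotVec φ ξ ρ}


open Function

section BirkhoffPeriodic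

theorem Function.IsPeriodicPt.birkhoffSum_add_period {α M : Type*} [AddCommMonoid M]
    {f : α → α} {x : α} {P : ℕ} (h : IsPeriodicPt f P x) (g : α → M) (n : ℕ) :
    birkhoffSum f g (n + P) x = birkhoffSum f g n x + birkhoffSum f g P x := by
  rw [add_comm n, birkhoffSum_add, h.eq, add_comm]

variable (𝕜 : Type*) {α E : Type*} [RCLike 𝕜] [NormedAddCommGroup E] [NormedSpace 𝕜 E]

/-- The deviation `birkhoffSum f g n x - n • v` from the mean `v` over one period is
`P`-periodic in `n`, hence bounded. -/
theorem Function.IsPeriodicPt.tendsto_birkhoffAverage {f : α → α} {x : α} {P : ℕ}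
    (h : IsPeriodicPt f P x) (hP : 0 < P) (g : α → E) :
    Tendsto (birkhoffAverage 𝕜 f g · x) atTop (𝓝 ((P : 𝕜)⁻¹ • birkhoffSum f g P x)) := by
  set v := (P : 𝕜)⁻¹ • birkhoffSum f g P x
  set D : ℕ → E := fun n => birkhoffSum f g n x - (n : 𝕜) • v
  have hD : Periodic D P := fun n => by
    simp only [D, v, h.birkhoffSum_add_period, Nat.cast_add, add_smul,
      smul_inv_smul₀ (Nat.cast_ne_zero.2 hP.ne' : (P : 𝕜) ≠ 0)]
    abel
  set B := ∑ k ∈ Finset.range P, ‖D k‖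
  have hB : ∀ n, ‖D n‖ ≤ B := fun n => by
    rw [← hD.map_mod_nat]
    exact Finset.single_le_sum (fun k _ => norm_nonneg (D k))
      (Finset.mem_range.2 (Nat.mod_lt n hP))
  refine tendsto_sub_nhds_zero_iff.1 (squeeze_zero_norm' ?_
    ((tendsto_const_nhds (x := B)).div_atTop tendsto_natCast_atTop_atTop))
  filter_upwards [eventually_ne_atTop 0] with n hn
  have hdev : birkhoffAverage 𝕜 f g n x - v = (n : 𝕜)⁻¹ • D n := by
    rw [smul_sub, inv_smul_smul₀ (Nat.cast_ne_zero.2 hn : (n : 𝕜) ≠ 0)]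
    rfl
  rw [hdev, norm_smul, norm_inv, RCLike.norm_natCast, inv_mul_eq_div]
  exact div_le_div_of_nonneg_right (hB n) (Nat.cast_nonneg n)

end BirkhoffPeriodic

section SymbolicDynamics

variable {s N : ℕ}

theorem shift_iterate_apply (ξ : SymbSpace s) (k : ℕ) (i : ℤ) :
    (shift^[k] ξ).1 i = ξ.1 (i + k) := by
  induction k generalizing ξ with
  | zero => simp
  | succ k ih =>
    rw [iterate_succ_apply, ih (shift ξ)]
    show ξ.1 (i + k + 1) = _
    rw [Nat.cast_succ, add_assoc]

theorem ExpLocDet.exists_norm_birkhoffSum_sub_le {φ : SymbSpace s → EuclideanSpace ℝ (Fin N)}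
    (hφ : ExpLocDet φ) :
    ∃ D, ∀ (n : ℕ) (ξ ξ' : SymbSpace s), (∀ j : ℤ, 0 ≤ j → j < n → ξ.1 j = ξ'.1 j) →
      ‖birkhoffSum shift φ n ξ - birkhoffSum shift φ n ξ'‖ ≤ D := by
  obtain ⟨C, hC, δ, hδ₀, hδ₁, hloc⟩ := hφ
  refine ⟨2 * C / (1 - δ), fun n ξ ξ' hξ => ?_⟩
  have hgeom : ∑ k ∈ Finset.range n, δ ^ k ≤ 1 / (1 - δ) := by
    rw [Finset.range_eq_Ico]
    simpa using geom_sum_Ico_le_of_lt_one (m := 0) (n := n) hδ₀.le hδ₁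
  calc ‖birkhoffSum shift φ n ξ - birkhoffSum shift φ n ξ'‖
      ≤ ∑ k ∈ Finset.range n, ‖φ (shift^[k] ξ) - φ (shift^[k] ξ')‖ := by
        simpa only [dist_eq_norm] using dist_birkhoffSum_birkhoffSum_le shift φ n ξ ξ'
    _ ≤ ∑ k ∈ Finset.range n, C * (δ ^ k + δ ^ (n - 1 - k)) := by
        gcongr with k hk
        refine hloc k (n - 1 - k) _ _ fun j hj₁ hj₂ => ?_
        rw [shift_iterate_apply, shift_iterate_apply]
        have := Finset.mem_range.1 hk
        exact hξ _ (by omega) (by omega)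
    _ = 2 * C * ∑ k ∈ Finset.range n, δ ^ k := by
        rw [← Finset.mul_sum, Finset.sum_add_distrib, Finset.sum_range_reflect (δ ^ ·) n]
        ring
    _ ≤ 2 * C * (1 / (1 - δ)) := by gcongr
    _ = 2 * C / (1 - δ) := mul_one_div _ _

theorem apply_emod_ne_apply_add_one_emod {β : Type*} {P : ℤ} (hP : 0 < P) {g : ℤ → β}
    (hg : ∀ k, 0 ≤ k → k + 1 < P → g k ≠ g (k + 1)) (hwrap : g (P - 1) ≠ g 0) (i : ℤ) :
    g (i % P) ≠ g ((i + 1) % P) := by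
  have h₀ := Int.emod_nonneg i hP.ne'
  have h₁ := Int.emod_lt_of_pos i hP
  rw [← Int.emod_add_emod]
  rcases (show i % P + 1 < P ∨ i % P + 1 = P by omega) with h | h
  · rw [Int.emod_eq_of_lt (by omega) h]
    exact hg _ h₀ h
  · rw [h, Int.emod_self, show i % P = P - 1 by omega]
    exact hwrap

def concatWord (ξ₁ ξ₂ : SymbSpace s) (n₁ n₂ : ℕ) (c₁ c₂ : Fin s) (k : ℤ) : Fin s :=
  if k < n₁ then ξ₁.1 k
  else if k = n₁ then c₁
  else if k ≤ n₁ + n₂ then ξ₂.1 (k - n₁ - 1)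
  else c₂

namespace concatWord

variable {ξ₁ ξ₂ : SymbSpace s} {n₁ n₂ : ℕ} {c₁ c₂ : Fin s} {k : ℤ}

theorem of_lt (h : k < n₁) : concatWord ξ₁ ξ₂ n₁ n₂ c₁ c₂ k = ξ₁.1 k := if_pos h

theorem of_eq (h : k = n₁) : concatWord ξ₁ ξ₂ n₁ n₂ c₁ c₂ k = c₁ := by
  simp [concatWord, h]

theorem of_lt_of_le (h₁ : n₁ < k) (h₂ : k ≤ n₁ + n₂) :
    concatWord ξ₁ ξ₂ n₁ n₂ c₁ c₂ k = ξ₂.1 (k - n₁ - 1) := by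
  simp [concatWord, h₂, h₁.ne', h₁.not_gt]

theorem of_gt (h : n₁ + n₂ < k) : concatWord ξ₁ ξ₂ n₁ n₂ c₁ c₂ k = c₂ := by
  simp [concatWord, h.not_ge, show ¬k < n₁ by omega, show k ≠ n₁ by omega]

theorem ne_succ (hn₂ : 1 ≤ n₂) (hc₁ : c₁ ≠ ξ₁.1 (n₁ - 1)) (hc₁' : c₁ ≠ ξ₂.1 0)
    (hc₂ : c₂ ≠ ξ₂.1 (n₂ - 1)) (h₁ : k + 1 < n₁ + n₂ + 2) :
    concatWord ξ₁ ξ₂ n₁ n₂ c₁ c₂ k ≠ concatWord ξ₁ ξ₂ n₁ n₂ c₁ c₂ (k + 1) := by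
  rcases lt_trichotomy (k + 1) n₁ with h | h | h
  · rw [of_lt (show k < n₁ by omega), of_lt h]
    exact ξ₁.2 k
  · rw [of_lt (show k < n₁ by omega), of_eq h, show k = n₁ - 1 by omega]
    exact hc₁.symm
  rcases (show k = n₁ ∨ n₁ < k ∧ k + 1 ≤ n₁ + n₂ ∨ k = n₁ + n₂ by omega)
    with h' | ⟨h', h''⟩ | h'
  · rw [of_eq h', of_lt_of_le h (show k + 1 ≤ n₁ + n₂ by omega), h']
    simpa using hc₁'
  · rw [of_lt_of_le h' (show k ≤ n₁ + n₂ by omega), of_lt_of_le h h'',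
      show k + 1 - n₁ - 1 = k - n₁ - 1 + 1 by ring]
    exact ξ₂.2 _
  · rw [of_lt_of_le (show n₁ < k by omega) (show k ≤ n₁ + n₂ by omega),
      of_gt (show n₁ + n₂ < k + 1 by omega), show k - n₁ - 1 = n₂ - 1 by omega]
    exact hc₂.symm

end concatWord

theorem exists_isPeriodicPt_concat (hs : 3 ≤ s) (ξ₁ ξ₂ : SymbSpace s) {n₁ n₂ : ℕ}
    (hn₁ : 1 ≤ n₁) (hn₂ : 1 ≤ n₂) :
    ∃ η : SymbSpace s, IsPeriodicPt shift (n₁ + n₂ + 2) η ∧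
      (∀ j : ℤ, 0 ≤ j → j < n₁ → η.1 j = ξ₁.1 j) ∧
      (∀ j : ℤ, 0 ≤ j → j < n₂ → (shift^[n₁ + 1] η).1 j = ξ₂.1 j) := by
  obtain ⟨c₁, hc₁, hc₁'⟩ := Fin.exists_ne_and_ne_of_two_lt (ξ₁.1 (n₁ - 1)) (ξ₂.1 0) hs
  obtain ⟨c₂, hc₂, hc₂'⟩ := Fin.exists_ne_and_ne_of_two_lt (ξ₂.1 (n₂ - 1)) (ξ₁.1 0) hs
  have hwrap : concatWord ξ₁ ξ₂ n₁ n₂ c₁ c₂ ((n₁ + n₂ + 2 : ℕ) - 1)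
      ≠ concatWord ξ₁ ξ₂ n₁ n₂ c₁ c₂ 0 := by
    rw [concatWord.of_gt (by push_cast; omega), concatWord.of_lt (by omega)]
    exact hc₂'
  let η : SymbSpace s := ⟨fun i => concatWord ξ₁ ξ₂ n₁ n₂ c₁ c₂ (i % (n₁ + n₂ + 2 : ℕ)),
    apply_emod_ne_apply_add_one_emod (by omega)
      (fun k _ h₁ => concatWord.ne_succ hn₂ hc₁ hc₁' hc₂ (by omega)) hwrap⟩
  have hη : ∀ i : ℤ, 0 ≤ i → i < (n₁ + n₂ + 2 : ℕ) → η.1 i = concatWord ξ₁ ξ₂ n₁ n₂ c₁ c₂ i :=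
    fun i h₀ h₁ => congrArg (concatWord ξ₁ ξ₂ n₁ n₂ c₁ c₂) (Int.emod_eq_of_lt h₀ h₁)
  refine ⟨η, Subtype.ext (funext fun i => ?_), fun j h₀ h₁ => ?_, fun j h₀ h₁ => ?_⟩
  · rw [shift_iterate_apply]
    exact congrArg (concatWord ξ₁ ξ₂ n₁ n₂ c₁ c₂) (Int.add_emod_right i _)
  · rw [hη j h₀ (by omega)]
    exact concatWord.of_lt h₁
  · rw [shift_iterate_apply, hη _ (by omega) (by omega),
      concatWord.of_lt_of_le (by push_cast; omega) (by push_cast; omega)]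
    exact congrArg ξ₂.1 (by push_cast; ring)

theorem ExpLocDet.exists_mem_pointwiseRot_norm_smul_sub_le
    {φ : SymbSpace s → EuclideanSpace ℝ (Fin N)} {R : ℝ}
    (hφ : ExpLocDet φ) (hs : 3 ≤ s) (hbdd : ∀ ξ, ‖φ ξ‖ ≤ R) :
    ∃ K, ∀ (ξ₁ ξ₂ : SymbSpace s) (n₁ n₂ : ℕ), 1 ≤ n₁ → 1 ≤ n₂ →
      ∃ ρ ∈ PointwiseRot φ, ‖((n₁ + n₂ + 2 : ℕ) : ℝ) • ρ -
        (birkhoffSum shift φ n₁ ξ₁ + birkhoffSum shift φ n₂ ξ₂)‖ ≤ K := by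
  obtain ⟨D, hD⟩ := hφ.exists_norm_birkhoffSum_sub_le
  refine ⟨2 * D + 2 * R, fun ξ₁ ξ₂ n₁ n₂ hn₁ hn₂ => ?_⟩
  obtain ⟨η, hηper, hη₁, hη₂⟩ := exists_isPeriodicPt_concat hs ξ₁ ξ₂ hn₁ hn₂
  refine ⟨_, ⟨η, hηper.tendsto_birkhoffAverage ℝ (by omega) φ⟩, ?_⟩
  rw [smul_inv_smul₀ (by positivity)]
  set η₂ := shift^[n₁ + 1] η
  have hsplit : birkhoffSum shift φ (n₁ + n₂ + 2) η = birkhoffSum shift φ n₁ η +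
      birkhoffSum shift φ n₂ η₂ + (φ (shift^[n₁] η) + φ (shift^[n₂] η₂)) := by
    rw [show n₁ + n₂ + 2 = (n₁ + 1) + (n₂ + 1) by ring, birkhoffSum_add, birkhoffSum_succ,
      birkhoffSum_succ]
    abel
  calc _ = ‖(birkhoffSum shift φ n₁ η - birkhoffSum shift φ n₁ ξ₁) +
          (birkhoffSum shift φ n₂ η₂ - birkhoffSum shift φ n₂ ξ₂) +
          (φ (shift^[n₁] η) + φ (shift^[n₂] η₂))‖ := by
        rw [hsplit]
        congr 1
        abel
    _ ≤ D + D + (R + R) := by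
        refine norm_add₃_le.trans (add_le_add_three (hD n₁ η ξ₁ hη₁) (hD n₂ η₂ ξ₂ hη₂) ?_)
        exact (norm_add_le _ _).trans (add_le_add (hbdd _) (hbdd _))
    _ = 2 * D + 2 * R := by ring

theorem tendsto_natFloor_mul_add_one_div {a : ℝ} (ha : 0 ≤ a) :
    Tendsto (fun x : ℝ => ((⌊a * x⌋₊ + 1 : ℕ) : ℝ) / x) atTop (𝓝 a) := by
  simpa [add_div] using (tendsto_nat_floor_mul_div_atTop ha).add tendsto_inv_atTop_zero

theorem tendsto_div_of_tendsto_div_id {f g : ℝ → ℝ} {a : ℝ}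
    (hf : Tendsto (fun x => f x / x) atTop (𝓝 a)) (hg : Tendsto (fun x => g x / x) atTop (𝓝 1)) :
    Tendsto (fun x => f x / g x) atTop (𝓝 a) := by
  simpa using (hf.div hg one_ne_zero).congr'
    ((eventually_gt_atTop 0).mono fun x hx => div_div_div_cancel_right₀ hx.ne' _ _)

theorem smul_add_smul_mem_closure_pointwiseRot {φ : SymbSpace s → EuclideanSpace ℝ (Fin N)}
    {R : ℝ} (hs : 3 ≤ s) (hbdd : ∀ ξ, ‖φ ξ‖ ≤ R) (hφ : ExpLocDet φ)
    {u v : EuclideanSpace ℝ (Fin N)} (hu : u ∈ PointwiseRot φ) (hv : v ∈ PointwiseRot φ)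
    {a b : ℝ} (ha : 0 < a) (hb : 0 < b) (hab : a + b = 1) :
    a • u + b • v ∈ closure (PointwiseRot φ) := by
  obtain ⟨ξ₁, hξ₁⟩ := hu
  obtain ⟨ξ₂, hξ₂⟩ := hv
  obtain ⟨K, hK⟩ := hφ.exists_mem_pointwiseRot_norm_smul_sub_le hs hbdd
  set n₁ : ℝ → ℕ := fun x => ⌊a * x⌋₊ + 1
  set n₂ : ℝ → ℕ := fun x => ⌊b * x⌋₊ + 1
  set P : ℝ → ℕ := fun x => n₁ x + n₂ x + 2
  choose ρ hρ hρK using fun x => hK ξ₁ ξ₂ (n₁ x) (n₂ x) le_add_self le_add_self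
  have hn₁ : Tendsto n₁ atTop atTop := tendsto_atTop_mono (fun _ => Nat.le_succ _)
    (tendsto_nat_floor_atTop.comp (tendsto_id.const_mul_atTop ha))
  have hn₂ : Tendsto n₂ atTop atTop := tendsto_atTop_mono (fun _ => Nat.le_succ _)
    (tendsto_nat_floor_atTop.comp (tendsto_id.const_mul_atTop hb))
  have hP : Tendsto P atTop atTop := tendsto_atTop_mono (fun x => by simp only [P]; omega) hn₁
  have hPx : Tendsto (fun x => (P x : ℝ) / x) atTop (𝓝 1) := by
    have := ((tendsto_natFloor_mul_add_one_div ha.le).add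
      (tendsto_natFloor_mul_add_one_div hb.le)).add
      ((tendsto_const_nhds (x := (2 : ℝ))).div_atTop tendsto_id)
    simpa [P, n₁, n₂, hab, add_div] using this
  have hlim : Tendsto (fun x => ((n₁ x : ℝ) / P x) • birk φ (n₁ x) ξ₁ +
      ((n₂ x : ℝ) / P x) • birk φ (n₂ x) ξ₂) atTop (𝓝 (a • u + b • v)) :=
    ((tendsto_div_of_tendsto_div_id (tendsto_natFloor_mul_add_one_div ha.le) hPx).smul
      (hξ₁.comp hn₁)).add
    ((tendsto_div_of_tendsto_div_id (tendsto_natFloor_mul_add_one_div hb.le) hPx).smul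
      (hξ₂.comp hn₂))
  refine mem_closure_of_tendsto (tendsto_of_tendsto_of_dist hlim ?_) (Eventually.of_forall hρ)
  refine squeeze_zero (fun _ => dist_nonneg) (fun x => ?_)
    ((tendsto_const_nhds (x := K)).div_atTop (tendsto_natCast_atTop_atTop.comp hP))
  have hP₀ : (P x : ℝ) ≠ 0 := by positivity
  have hscale : ∀ (n : ℕ) (ξ : SymbSpace s), n ≠ 0 →
      ((n : ℝ) / P x) • birk φ n ξ = (P x : ℝ)⁻¹ • birkhoffSum shift φ n ξ := fun n ξ hn => by
    rw [birk, smul_smul]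
    congr 1
    field_simp
  calc _ = ‖(P x : ℝ)⁻¹ • ((P x : ℝ) • ρ x -
          (birkhoffSum shift φ (n₁ x) ξ₁ + birkhoffSum shift φ (n₂ x) ξ₂))‖ := by
        rw [dist_comm, dist_eq_norm, hscale _ _ (Nat.succ_ne_zero _),
          hscale _ _ (Nat.succ_ne_zero _), ← smul_add, smul_sub, inv_smul_smul₀ hP₀]
    _ ≤ K / P x := by
        rw [norm_smul, norm_inv, Real.norm_natCast, inv_mul_eq_div]
        exact div_le_div_of_nonneg_right (hρK x) (Nat.cast_nonneg _)

end SymbolicDynamics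

theorem closure_pointwise_rotation_set_convex_general (s N : ℕ) (hs : 3 ≤ s)
    (φ : SymbSpace s → EuclideanSpace ℝ (Fin N))
    (R : ℝ) (hbdd : ∀ ξ, ‖φ ξ‖ ≤ R) (hloc : ExpLocDet φ) :
    Convex ℝ (closure (PointwiseRot φ)) := by
  refine convex_iff_openSegment_subset.2 fun x hx y hy z ⟨a, b, ha, hb, hab, hz⟩ => ?_
  subst hz
  have hcont : Continuous (uncurry fun u v : EuclideanSpace ℝ (Fin N) => a • u + b • v) := by
    fun_prop
  simpa using map_mem_closure₂ hcont hx hy fun u hu v hv =>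
    smul_add_smul_mem_closure_pointwiseRot hs hbdd hloc hu hv ha hb hab

/-- the closure of the pointwise rotation set `J_φ` is convex. -/
theorem closure_pointwise_rotation_set_convex (s N : ℕ) (hs : 3 ≤ s) (hN : 1 ≤ N)
    (φ : SymbSpace s → EuclideanSpace ℝ (Fin N))
    (R : ℝ) (hR : 0 < R) (hbdd : ∀ ξ, ‖φ ξ‖ ≤ R) (hloc : ExpLocDet φ) :
    Convex ℝ (closure (PointwiseRot φ)) :=
  closure_pointwise_rotation_set_convex_general s N hs φ R hbdd hloc
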